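/- arXiv:0908.1559 — 3 statements merged into one kernel-verified Lean document; each statement's English description precedes it below -/
import Mathlib

section
/- Let d ≥ 1 be an integer, α ∈ (0,2) and p > α. There exist constants R_* ∈ (0,1) and C > 0, depending only on p, d and α, such that for every x ∈ ℝ^d with x_1 ∈ (0, R_*], the principal-value limit Δ̂_d^{α/2} w_p(x) := lim_{ε→0+} ∫_{{y ∈ ℝ^d : ε < |y−x| < 1}} (w_p(y) − w_p(x)) · 𝒜(d,α) · |x−y|^{−d−α} dy exists and satisfies |Δ̂_d^{α/2} w_p(x)| ≤ C. -/
open MeasureTheory Filter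

/-- The constant `𝒜(d,α) = α·2^{α−1}·π^{−d/2}·Γ((d+α)/2)/Γ(1−α/2)`. -/
noncomputable def frakA (d : ℕ) (α : ℝ) : ℝ :=
  α * (2 : ℝ) ^ (α - 1) * Real.pi ^ (-(d : ℝ) / 2) *
    Real.Gamma (((d : ℝ) + α) / 2) / Real.Gamma (1 - α / 2)

/-- The function `w_p(x) = (max(x_1,0))^p` on `ℝ^d`. -/
noncomputable def wp (d : ℕ) (hd : 0 < d) (p : ℝ) (x : EuclideanSpace ℝ (Fin d)) : ℝ :=
  max (x ⟨0, hd⟩) 0 ^ p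

/-- `truncFracLapPV d α lam u x L` says that the principal-value limit defining the
`lam`-truncated fractional Laplacian `Δ̂_{d,lam}^{α/2} u(x)` exists and equals `L`. -/
def truncFracLapPV (d : ℕ) (α lam : ℝ) (u : EuclideanSpace ℝ (Fin d) → ℝ)
    (x : EuclideanSpace ℝ (Fin d)) (L : ℝ) : Prop :=
  Tendsto (fun ε : ℝ =>
      ∫ y in {y : EuclideanSpace ℝ (Fin d) | ε < ‖y - x‖ ∧ ‖y - x‖ < lam},
        (u y - u x) * frakA d α * ‖x - y‖ ^ (-((d : ℝ) + α)))
    (nhdsWithin 0 (Set.Ioi 0)) (nhds L)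


/-!
The kernel is even, so pairing `z` with `-z` turns the truncated integrals into integrals of the
second difference `w_p(x+z) + w_p(x-z) - 2 w_p(x)` against `‖z‖^(-d-α)`. For `0 < x₁ ≤ 1` this
second difference is `O(‖z‖^min(p,2))` uniformly in `x`: where `|z₁|` is small compared with
`x₁` it is the Taylor bound for `t ↦ t^p` near `x₁`, and otherwise every term is at most
`(3|z₁|)^p`. As `min(p,2) > α`, the paired integrand has the integrable majorant
`‖z‖^(min(p,2)-d-α)` on the unit ball, so the principal value converges by dominated convergence
and is bounded by the integral of the majorant.
-/

open Set Metric Topology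

def secondDiff {G : Type*} [AddGroup G] (u : G → ℝ) (x h : G) : ℝ :=
  u (x + h) + u (x - h) - 2 * u x

theorem secondDiff_zero_right {G : Type*} [AddGroup G] (u : G → ℝ) (x : G) :
    secondDiff u x 0 = 0 := by
  simp only [secondDiff, add_zero, sub_zero]; ring

theorem secondDiff_neg_right {G : Type*} [AddGroup G] (u : G → ℝ) (x h : G) :
    secondDiff u x (-h) = secondDiff u x h := by
  simp only [secondDiff, sub_neg_eq_add, ← sub_eq_add_neg]; ring

theorem abs_secondDiff_le_of_hasDerivAt {f f' f'' : ℝ → ℝ} {a h K : ℝ} (hh : 0 ≤ h)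
    (hf : ∀ t ∈ Icc (a - h) (a + h), HasDerivAt f (f' t) t)
    (hf' : ∀ t ∈ Icc (a - h) (a + h), HasDerivAt f' (f'' t) t)
    (hK : ∀ t ∈ Icc (a - h) (a + h), |f'' t| ≤ K) :
    |secondDiff f a h| ≤ 2 * K * h ^ 2 := by
  have hf'_lip : ∀ s ∈ Icc (a - h) (a + h), ∀ t ∈ Icc (a - h) (a + h),
      |f' s - f' t| ≤ K * |s - t| := fun s hs t ht =>
    (convex_Icc _ _).norm_image_sub_le_of_norm_hasDerivWithin_le
      (fun u hu => (hf' u hu).hasDerivWithinAt) hK ht hs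
  set g : ℝ → ℝ := fun t => f (a + t) + f (a - t)
  have hg : ∀ t ∈ Icc 0 h, HasDerivWithinAt g (f' (a + t) - f' (a - t)) (Icc 0 h) t := by
    rintro t ⟨ht0, hth⟩
    have h₁ := (hf (a + t) ⟨by linarith, by linarith⟩).comp t ((hasDerivAt_id t).const_add a)
    have h₂ := (hf (a - t) ⟨by linarith, by linarith⟩).comp t ((hasDerivAt_id t).const_sub a)
    exact ((h₁.add h₂).congr_deriv (by ring)).hasDerivWithinAt
  have hg_bound : ∀ t ∈ Icc 0 h, ‖f' (a + t) - f' (a - t)‖ ≤ 2 * K * h := by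
    rintro t ⟨ht0, hth⟩
    have hK0 : 0 ≤ K := (abs_nonneg _).trans (hK a ⟨by linarith, by linarith⟩)
    calc ‖f' (a + t) - f' (a - t)‖ ≤ K * |a + t - (a - t)| :=
          hf'_lip _ ⟨by linarith, by linarith⟩ _ ⟨by linarith, by linarith⟩
      _ = K * (2 * t) := by rw [abs_of_nonneg (by linarith)]; ring
      _ ≤ 2 * K * h := by nlinarith
  have hg_mvt := (convex_Icc 0 h).norm_image_sub_le_of_norm_hasDerivWithin_le hg hg_bound
    (left_mem_Icc.2 hh) (right_mem_Icc.2 hh)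
  simp only [g, add_zero, sub_zero, Real.norm_eq_abs, abs_of_nonneg hh] at hg_mvt
  calc |secondDiff f a h| = |f (a + h) + f (a - h) - (f a + f a)| := by rw [secondDiff, two_mul]
    _ ≤ 2 * K * h * h := hg_mvt
    _ = 2 * K * h ^ 2 := by ring

theorem rpow_sub_two_le {p h t : ℝ} (hh : 0 < h) (hht : h ≤ t) (ht : t ≤ 2) :
    t ^ (p - 2) ≤ 2 ^ |p - 2| * h ^ (min p 2 - 2) := by
  rcases le_total p 2 with hp | hp
  · rw [min_eq_left hp]
    calc t ^ (p - 2) ≤ h ^ (p - 2) := Real.rpow_le_rpow_of_nonpos hh hht (by linarith)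
      _ ≤ 2 ^ |p - 2| * h ^ (p - 2) :=
        le_mul_of_one_le_left (by positivity) (Real.one_le_rpow (by norm_num) (abs_nonneg _))
  · rw [min_eq_right hp, sub_self, Real.rpow_zero, mul_one, abs_of_nonneg (by linarith)]
    exact Real.rpow_le_rpow (by linarith) ht (by linarith)

theorem abs_secondDiff_rpow_le {p a h : ℝ} (hh : 0 < h) (hha : 2 * h < a) (ha : a + h ≤ 2) :
    |secondDiff (· ^ p) a h| ≤ 2 * (|p * (p - 1)| * 2 ^ |p - 2|) * h ^ min p 2 := by
  have hpos : ∀ t ∈ Icc (a - h) (a + h), 0 < t := fun t ht => by linarith [ht.1]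
  have key := abs_secondDiff_le_of_hasDerivAt (f := (· ^ p))
    (f' := fun t => p * t ^ (p - 1)) (f'' := fun t => p * ((p - 1) * t ^ (p - 1 - 1)))
    (K := |p * (p - 1)| * (2 ^ |p - 2| * h ^ (min p 2 - 2))) hh.le
    (fun t ht => Real.hasDerivAt_rpow_const (Or.inl (hpos t ht).ne'))
    (fun t ht => (Real.hasDerivAt_rpow_const (Or.inl (hpos t ht).ne')).const_mul p)
    (fun t ht => by
      rw [show p - 1 - 1 = p - 2 by ring, ← mul_assoc, abs_mul,
        abs_of_pos (Real.rpow_pos_of_pos (hpos t ht) _)]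
      exact mul_le_mul_of_nonneg_left
        (rpow_sub_two_le hh (by linarith [ht.1]) (by linarith [ht.2])) (abs_nonneg _))
  calc _ ≤ _ := key
    _ = 2 * (|p * (p - 1)| * 2 ^ |p - 2|) * (h ^ (min p 2 - 2) * h ^ (2 : ℝ)) := by
      rw [Real.rpow_two]; ring
    _ = _ := by rw [← Real.rpow_add hh, sub_add_cancel]

theorem abs_secondDiff_max_rpow_le_of_le {p a h : ℝ} (hp : 0 ≤ p) (ha : 0 < a)
    (hah : a ≤ 2 * |h|) :
    |secondDiff (max · 0 ^ p) a h| ≤ 4 * 3 ^ p * |h| ^ p := by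
  have hbound : ∀ t, |t| ≤ 3 * |h| → max t 0 ^ p ≤ 3 ^ p * |h| ^ p := fun t ht => by
    rw [← Real.mul_rpow (by norm_num) (abs_nonneg h)]
    exact Real.rpow_le_rpow (le_max_right _ _)
      (max_le ((le_abs_self t).trans ht) (by positivity)) hp
  have h₁ := hbound (a + h) (by cases abs_cases h <;> cases abs_cases (a + h) <;> linarith)
  have h₂ := hbound (a - h) (by cases abs_cases h <;> cases abs_cases (a - h) <;> linarith)
  have h₃ := hbound a (by rw [abs_of_pos ha]; linarith [abs_nonneg h])
  have := Real.rpow_nonneg (le_max_right (a + h) 0) p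
  have := Real.rpow_nonneg (le_max_right (a - h) 0) p
  have := Real.rpow_nonneg (le_max_right a 0) p
  rw [secondDiff, abs_le]
  constructor <;> linarith

theorem exists_abs_secondDiff_max_rpow_le {p : ℝ} (hp : 0 < p) :
    ∃ C, 0 ≤ C ∧ ∀ a h : ℝ, 0 < a → a ≤ 1 → |h| ≤ 1 →
      |secondDiff (max · 0 ^ p) a h| ≤ C * |h| ^ min p 2 := by
  refine ⟨4 * 3 ^ p + 2 * (|p * (p - 1)| * 2 ^ |p - 2|), by positivity, ?_⟩
  intro a h ha ha1 hh1
  wlog hh : 0 ≤ h generalizing h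
  · simpa only [secondDiff_neg_right, abs_neg] using
      this (-h) (by rwa [abs_neg]) (by linarith)
  have hq : |h| ^ p ≤ |h| ^ min p 2 :=
    Real.rpow_le_rpow_of_exponent_ge' (abs_nonneg h) hh1 (by positivity) (min_le_left _ _)
  rcases le_or_gt a (2 * |h|) with hah | hah
  · calc _ ≤ 4 * 3 ^ p * |h| ^ p := abs_secondDiff_max_rpow_le_of_le hp.le ha hah
      _ ≤ 4 * 3 ^ p * |h| ^ min p 2 := by gcongr
      _ ≤ _ := by gcongr; exact le_add_of_nonneg_right (by positivity)
  · rw [abs_of_nonneg hh] at hah ⊢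
    rcases hh.eq_or_lt with rfl | hh
    · rw [secondDiff_zero_right, abs_zero]
      positivity
    have hsmooth : secondDiff (max · 0 ^ p) a h = secondDiff (· ^ p) a h := by
      simp only [secondDiff, max_eq_left ha.le, max_eq_left (by linarith : 0 ≤ a + h),
        max_eq_left (by linarith : 0 ≤ a - h)]
    calc _ = _ := by rw [hsmooth]
      _ ≤ _ := abs_secondDiff_rpow_le hh hah (by linarith)
      _ ≤ _ := by gcongr; exact le_add_of_nonneg_left (by positivity)

section PrincipalValue

variable {E : Type*} [NormedAddCommGroup E]

def annulus (ε r : ℝ) : Set E := {z | ε < ‖z‖ ∧ ‖z‖ < r}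

theorem annulus_subset_annulus {ε ε' r : ℝ} (h : ε ≤ ε') :
    (annulus ε' r : Set E) ⊆ annulus ε r :=
  fun _ hz => ⟨h.trans_lt hz.1, hz.2⟩

theorem annulus_subset_ball (ε r : ℝ) : (annulus ε r : Set E) ⊆ ball 0 r :=
  fun _ hz => mem_ball_zero_iff.2 hz.2

theorem neg_preimage_annulus (ε r : ℝ) : (fun z : E => -z) ⁻¹' annulus ε r = annulus ε r := by
  ext z; simp [annulus]

variable [MeasurableSpace E] [BorelSpace E] {μ : Measure E} {ε r : ℝ}

theorem measurableSet_annulus (ε r : ℝ) : MeasurableSet (annulus ε r : Set E) :=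
  (measurableSet_lt measurable_const measurable_norm).inter
    (measurableSet_lt measurable_norm measurable_const)

-- `annulus 0 r` omits the origin, so the indicators below converge at every point and no
-- assumption `μ {0} = 0` is needed.
theorem tendsto_setIntegral_annulus {g : E → ℝ} (hg : IntegrableOn g (annulus 0 r) μ) :
    Tendsto (fun ε => ∫ z in annulus ε r, g z ∂μ) (𝓝[>] 0)
      (𝓝 (∫ z in annulus 0 r, g z ∂μ)) := by
  simp_rw [← integral_indicator (measurableSet_annulus _ _)]
  refine tendsto_integral_filter_of_dominated_convergence ((annulus 0 r).indicator (‖g ·‖))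
    ?_ ?_ (IntegrableOn.integrable_indicator hg.norm (measurableSet_annulus _ _)) ?_
  · filter_upwards [self_mem_nhdsWithin] with ε hε
    exact ((hg.mono_set (annulus_subset_annulus (le_of_lt hε))).integrable_indicator
      (measurableSet_annulus _ _)).aestronglyMeasurable
  · filter_upwards [self_mem_nhdsWithin] with ε hε
    refine ae_of_all _ fun z => ?_
    rw [norm_indicator_eq_indicator_norm]
    exact indicator_le_indicator_of_subset (annulus_subset_annulus (le_of_lt hε))
      (fun _ => norm_nonneg _) z
  · refine ae_of_all _ fun z => tendsto_const_nhds.congr' ?_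
    have hmem : ∀ᶠ ε in 𝓝[>] (0 : ℝ), (z ∈ annulus ε r ↔ z ∈ annulus 0 r) := by
      rcases (norm_nonneg z).eq_or_lt with hz | hz
      · filter_upwards [self_mem_nhdsWithin] with ε hε
        simp only [annulus, mem_ofPred_eq, ← hz, lt_self_iff_false, false_and, iff_false]
        exact fun h => (lt_asymm hε h.1).elim
      · filter_upwards [nhdsWithin_le_nhds (gt_mem_nhds hz)] with ε hε
        simp only [annulus, mem_ofPred_eq, hε, hz, true_and]
    filter_upwards [hmem] with ε hε
    by_cases hz : z ∈ annulus 0 r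
    · rw [indicator_of_mem hz, indicator_of_mem (hε.2 hz)]
    · rw [indicator_of_notMem hz, indicator_of_notMem (hε.not.2 hz)]

theorem setIntegral_annulus_eq_setIntegral_even [μ.IsNegInvariant] {f : E → ℝ}
    (hf : IntegrableOn f (annulus ε r) μ) :
    ∫ z in annulus ε r, f z ∂μ = ∫ z in annulus ε r, (f z + f (-z)) / 2 ∂μ := by
  have hneg := Measure.measurePreserving_neg μ
  have hemb := (Homeomorph.neg E).measurableEmbedding
  have hf_neg : IntegrableOn (fun z => f (-z)) (annulus ε r) μ := by
    rw [← neg_preimage_annulus] at hf ⊢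
    exact (hneg.integrableOn_comp_preimage hemb).2 (by rwa [neg_preimage_annulus] at hf)
  have h_eq : ∫ z in annulus ε r, f (-z) ∂μ = ∫ z in annulus ε r, f z ∂μ := by
    have := hneg.setIntegral_preimage_emb hemb f (annulus ε r)
    rwa [neg_preimage_annulus] at this
  rw [integral_div, integral_add hf hf_neg, h_eq]
  ring

theorem ContinuousOn.integrableOn_annulus [ProperSpace E] [IsFiniteMeasureOnCompacts μ]
    {f : E → ℝ} (hf : ContinuousOn f {0}ᶜ) (hε : 0 < ε) : IntegrableOn f (annulus ε r) μ := by
  have hK : IsCompact (closedBall (0 : E) r \ ball 0 ε) :=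
    (isCompact_closedBall 0 r).diff isOpen_ball
  refine ((hf.mono fun z hz => ?_).integrableOn_compact hK).mono_set fun z hz => ?_
  · rintro rfl
    exact hz.2 (mem_ball_self hε)
  · exact ⟨mem_closedBall_zero_iff.2 hz.2.le, by simpa using hz.1.le⟩

theorem tendsto_setIntegral_annulus_of_integrableOn_even [ProperSpace E]
    [IsFiniteMeasureOnCompacts μ] [μ.IsNegInvariant] {f : E → ℝ} (hf : ContinuousOn f {0}ᶜ)
    (hS : IntegrableOn (fun z => (f z + f (-z)) / 2) (annulus 0 r) μ) :
    Tendsto (fun ε => ∫ z in annulus ε r, f z ∂μ) (𝓝[>] 0)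
      (𝓝 (∫ z in annulus 0 r, (f z + f (-z)) / 2 ∂μ)) :=
  (tendsto_setIntegral_annulus hS).congr' <| by
    filter_upwards [self_mem_nhdsWithin] with ε hε
    exact (setIntegral_annulus_eq_setIntegral_even (hf.integrableOn_annulus hε)).symm

end PrincipalValue

theorem truncFracLapPV_of_integrableOn {d : ℕ} {α lam : ℝ} {u : EuclideanSpace ℝ (Fin d) → ℝ}
    {x : EuclideanSpace ℝ (Fin d)} (hu : Continuous u)
    (hint : IntegrableOn (fun z => secondDiff u x z * ‖z‖ ^ (-((d : ℝ) + α))) (annulus 0 lam)) :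
    truncFracLapPV d α lam u x
      (frakA d α / 2 * ∫ z in annulus 0 lam, secondDiff u x z * ‖z‖ ^ (-((d : ℝ) + α))) := by
  set f : EuclideanSpace ℝ (Fin d) → ℝ :=
    fun z => (u (x + z) - u x) * frakA d α * ‖z‖ ^ (-((d : ℝ) + α))
  have hf_even : ∀ z, (f z + f (-z)) / 2 =
      frakA d α / 2 * (secondDiff u x z * ‖z‖ ^ (-((d : ℝ) + α))) := by
    intro z
    simp only [f, secondDiff, norm_neg, ← sub_eq_add_neg]
    ring
  have hf : ContinuousOn f {0}ᶜ := fun z hz =>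
    ((((hu.comp (continuous_const_add x)).sub continuous_const).mul
      continuous_const).continuousAt.mul (continuous_norm.continuousAt.rpow_const
        (Or.inl (norm_ne_zero_iff.2 hz)))).continuousWithinAt
  have hT := tendsto_setIntegral_annulus_of_integrableOn_even (μ := volume) (r := lam) hf
    (by simp_rw [hf_even]; exact hint.const_mul _)
  simp_rw [hf_even, integral_const_mul] at hT
  refine hT.congr fun ε => ?_
  have hpre : (x + ·) ⁻¹' {y | ε < ‖y - x‖ ∧ ‖y - x‖ < lam} = annulus ε lam := by
    ext z; simp [annulus]
  rw [← (measurePreserving_add_left volume x).setIntegral_preimage_emb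
    (measurableEmbedding_addLeft x) _ {y | ε < ‖y - x‖ ∧ ‖y - x‖ < lam}, hpre]
  simp [f]

theorem continuous_wp {d : ℕ} (hd : 0 < d) {p : ℝ} (hp : 0 ≤ p) : Continuous (wp d hd p) :=
  ((PiLp.continuous_apply 2 _ _).max continuous_const).rpow_const fun _ => Or.inr hp

theorem secondDiff_wp {d : ℕ} (hd : 0 < d) (p : ℝ) (x z : EuclideanSpace ℝ (Fin d)) :
    secondDiff (wp d hd p) x z = secondDiff (max · 0 ^ p) (x ⟨0, hd⟩) (z ⟨0, hd⟩) := by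
  simp [secondDiff, wp]

theorem exists_abs_secondDiff_wp_mul_le {d : ℕ} (hd : 0 < d) {p : ℝ} (hp : 0 < p) (α : ℝ) :
    ∃ C, 0 ≤ C ∧ ∀ x z : EuclideanSpace ℝ (Fin d), x ⟨0, hd⟩ ∈ Ioc 0 1 → ‖z‖ ≤ 1 →
      |secondDiff (wp d hd p) x z * ‖z‖ ^ (-((d : ℝ) + α))| ≤
        C * ‖z‖ ^ (-((d : ℝ) + α - min p 2)) := by
  obtain ⟨C, hC, hsec⟩ := exists_abs_secondDiff_max_rpow_le hp
  refine ⟨C, hC, fun x z hx hz => ?_⟩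
  rcases eq_or_ne z 0 with rfl | hz0
  · rw [secondDiff_zero_right, zero_mul, abs_zero]
    positivity
  have hcoord : |z ⟨0, hd⟩| ≤ ‖z‖ := PiLp.norm_apply_le z _
  have hdiff : |secondDiff (wp d hd p) x z| ≤ C * ‖z‖ ^ min p 2 :=
    calc _ ≤ C * |z ⟨0, hd⟩| ^ min p 2 :=
          secondDiff_wp hd p x z ▸ hsec _ _ hx.1 hx.2 (hcoord.trans hz)
      _ ≤ C * ‖z‖ ^ min p 2 := by gcongr
  rw [abs_mul, abs_of_nonneg (Real.rpow_nonneg (norm_nonneg z) _), show -((d : ℝ) + α - min p 2) =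
    min p 2 + -((d : ℝ) + α) by ring, Real.rpow_add (norm_pos_iff.2 hz0), ← mul_assoc]
  gcongr

theorem exists_integrableOn_secondDiff_wp_and_abs_integral_le {d : ℕ} (hd : 0 < d) {α p : ℝ}
    (hα2 : α < 2) (hp : α < p) (hp0 : 0 < p) :
    ∃ M, 0 ≤ M ∧ ∀ x : EuclideanSpace ℝ (Fin d), x ⟨0, hd⟩ ∈ Ioc 0 1 →
      IntegrableOn (fun z => secondDiff (wp d hd p) x z * ‖z‖ ^ (-((d : ℝ) + α))) (annulus 0 1) ∧
      |∫ z in annulus 0 1, secondDiff (wp d hd p) x z * ‖z‖ ^ (-((d : ℝ) + α))| ≤ M := by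
  obtain ⟨C, hC, hbound⟩ := exists_abs_secondDiff_wp_mul_le hd hp0 α
  set K : EuclideanSpace ℝ (Fin d) → ℝ := fun z => C * ‖z‖ ^ (-((d : ℝ) + α - min p 2))
  have hK : IntegrableOn K (ball 0 1) := by
    refine integrableOn_ball_of_norm_le_rpow (by rwa [finrank_euclideanSpace_fin]) ?_
      (ae_of_all _ fun z => (Real.norm_of_nonneg (by positivity)).le) (by fun_prop)
    rw [finrank_euclideanSpace_fin]
    linarith [lt_min hp hα2]
  have hK_ann : IntegrableOn K (annulus 0 1) := hK.mono_set (annulus_subset_ball 0 1)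
  refine ⟨∫ z in ball 0 1, K z, setIntegral_nonneg measurableSet_ball fun z _ => by positivity,
    fun x hx => ?_⟩
  have hdom : ∀ᵐ z ∂volume.restrict (annulus 0 1),
      ‖secondDiff (wp d hd p) x z * ‖z‖ ^ (-((d : ℝ) + α))‖ ≤ K z :=
    ae_restrict_of_forall_mem (measurableSet_annulus 0 1) fun z hz => hbound x z hx hz.2.le
  have hmeas : Measurable (secondDiff (wp d hd p) x) := by
    have := (continuous_wp hd hp0.le).measurable
    unfold secondDiff
    fun_prop
  refine ⟨hK_ann.mono' (by fun_prop : Measurable _).aestronglyMeasurable hdom, ?_⟩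
  calc _ ≤ ∫ z in annulus 0 1, K z := norm_integral_le_of_norm_le hK_ann hdom
    _ ≤ ∫ z in ball 0 1, K z := setIntegral_mono_set hK (ae_of_all _ fun z => by positivity)
          (annulus_subset_ball 0 1).eventuallyLE

theorem statement0 (d : ℕ) (hd : 0 < d) (α p : ℝ) (hα1 : 0 < α) (hα2 : α < 2)
    (hp : α < p) :
    ∃ Rstar C : ℝ, Rstar ∈ Set.Ioo (0 : ℝ) 1 ∧ 0 < C ∧
      ∀ x : EuclideanSpace ℝ (Fin d), x ⟨0, hd⟩ ∈ Set.Ioc (0 : ℝ) Rstar →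
        ∃ L : ℝ, truncFracLapPV d α 1 (wp d hd p) x L ∧ |L| ≤ C := by
  have hp0 : 0 < p := hα1.trans hp
  obtain ⟨M, hM, hwp⟩ := exists_integrableOn_secondDiff_wp_and_abs_integral_le hd hα2 hp hp0
  refine ⟨1 / 2, |frakA d α| / 2 * M + 1, ⟨by norm_num, by norm_num⟩, by positivity,
    fun x hx => ?_⟩
  obtain ⟨hint, hle⟩ := hwp x ⟨hx.1, hx.2.trans (by norm_num)⟩
  refine ⟨_, truncFracLapPV_of_integrableOn (continuous_wp hd hp0.le) hint, ?_⟩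
  rw [abs_mul, abs_div, abs_two]
  exact (mul_le_mul_of_nonneg_left hle (by positivity)).trans (le_add_of_nonneg_right zero_le_one)
end

section
/- Let α ∈ (0,2), p > 0, x > 0 and ε ∈ (0, 1/x). Then the Lebesgue integrals below are finite and ∫_{1+ε}^{(x+1)/x} (z^p − 1)/(z−1)^{α+1} dz = ((1+ε)^p − 1)/(α·ε^α) + x^α/α − (x+1)^p · x^{α−p}/α + (p/α) · ∫_{x/(x+1)}^{1/(1+ε)} z^{α−p−1} · (1−z)^{−α} dz. -/
/-!
Integrate by parts with `u = z ^ p - 1` and `dv = (z - 1) ^ (-α - 1) dz`; the remaining integral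
`(p / α) ∫ z ^ (p - 1) (z - 1) ^ (-α) dz` becomes the integral over `[x / (x + 1), 1 / (1 + ε)]`
under the substitution `z = 1 / w`, and the boundary term at `z = (x + 1) / x`, where
`z - 1 = 1 / x`, is `x ^ α / α - (x + 1) ^ p x ^ (α - p) / α`.
-/

open MeasureTheory Set intervalIntegral
open scoped Interval

lemma one_lt_of_mem_uIcc {a b z : ℝ} (ha : 1 < a) (hb : 1 < b) (hz : z ∈ [[a, b]]) : 1 < z :=
  (lt_min ha hb).trans_le hz.1

-- No integrability of `g` is needed since `w ↦ w⁻¹` is monotone on the interval.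
theorem integral_comp_inv_div_sq {a b : ℝ} (ha : 0 < a) (hb : 0 < b) (g : ℝ → ℝ) :
    ∫ z in a..b, g z = ∫ w in b⁻¹..a⁻¹, g w⁻¹ / w ^ 2 := by
  have hpos : ∀ w ∈ [[a⁻¹, b⁻¹]], 0 < w := fun w hw =>
    (lt_min (inv_pos.2 ha) (inv_pos.2 hb)).trans_le hw.1
  have hsubst := integral_comp_mul_deriv_of_deriv_nonpos (g := g) (f := fun w : ℝ => w⁻¹)
    (f' := fun w => -(w ^ 2)⁻¹) (a := a⁻¹) (b := b⁻¹)
    (continuousOn_inv₀.mono fun w hw => (hpos w hw).ne')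
    (fun w hw => hasDerivAt_inv (hpos w (Ioo_subset_Icc_self hw)).ne')
    (fun w _ => neg_nonpos.2 (by positivity))
  simp only [inv_inv, Function.comp_apply] at hsubst
  rw [← hsubst, integral_symm, ← intervalIntegral.integral_neg]
  congr 1 with w
  ring

theorem inv_rpow_mul_inv_sub_one_rpow_div_sq {w : ℝ} (p α : ℝ) (hw0 : 0 < w) (hw1 : w ≤ 1) :
    w⁻¹ ^ (p - 1) * (w⁻¹ - 1) ^ (-α) / w ^ 2 = w ^ (α - p - 1) * (1 - w) ^ (-α) := by
  have h1w : 0 ≤ 1 - w := by linarith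
  rw [show w⁻¹ - 1 = (1 - w) * w⁻¹ by field_simp, Real.mul_rpow h1w (inv_nonneg.2 hw0.le),
    Real.inv_rpow hw0.le, Real.inv_rpow hw0.le, ← Real.rpow_natCast, ← Real.rpow_neg hw0.le,
    ← Real.rpow_neg hw0.le, div_eq_mul_inv, ← Real.rpow_neg hw0.le, mul_comm ((1 - w) ^ (-α)),
    ← mul_assoc, ← Real.rpow_add hw0, mul_right_comm, ← Real.rpow_add hw0]
  congr 2
  push_cast
  ring

theorem integral_rpow_sub_one_div_sub_one_rpow {a b : ℝ} (p : ℝ) {α : ℝ} (hα : α ≠ 0)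
    (ha : 1 < a) (hb : 1 < b) :
    ∫ z in a..b, (z ^ p - 1) / (z - 1) ^ (α + 1)
      = (a ^ p - 1) / (α * (a - 1) ^ α) - (b ^ p - 1) / (α * (b - 1) ^ α) +
          p / α * ∫ z in a..b, z ^ (p - 1) * (z - 1) ^ (-α) := by
  have hz : ∀ z ∈ [[a, b]], 0 < z - 1 := fun z hz => sub_pos.2 (one_lt_of_mem_uIcc ha hb hz)
  have hu : ∀ z ∈ [[a, b]], HasDerivAt (fun z : ℝ => z ^ p - 1) (p * z ^ (p - 1)) z :=
    fun z hz' => (Real.hasDerivAt_rpow_const (Or.inl (by linarith [hz z hz']))).sub_const 1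
  have hv : ∀ z ∈ [[a, b]], HasDerivAt (fun z : ℝ => -(z - 1) ^ (-α) / α) ((z - 1) ^ (-α - 1)) z := by
    intro z hz'
    have h := (((hasDerivAt_id' z).sub_const 1).rpow_const (p := -α)
      (Or.inl (hz z hz').ne')).neg.div_const α
    exact h.congr_deriv (by field_simp)
  have hu' : IntervalIntegrable (fun z : ℝ => p * z ^ (p - 1)) volume a b :=
    (continuousOn_const.mul (continuousOn_id.rpow_const fun z hz' =>
      Or.inl (by simp only [id]; linarith [hz z hz']))).intervalIntegrable
  have hv' : IntervalIntegrable (fun z : ℝ => (z - 1) ^ (-α - 1)) volume a b :=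
    ((continuousOn_id.sub continuousOn_const).rpow_const fun z hz' =>
      Or.inl (hz z hz').ne').intervalIntegrable
  have hparts := integral_mul_deriv_eq_deriv_mul hu hv hu' hv'
  have hlhs : ∫ z in a..b, (z ^ p - 1) / (z - 1) ^ (α + 1)
      = ∫ z in a..b, (z ^ p - 1) * (z - 1) ^ (-α - 1) := by
    refine integral_congr fun z hz' => ?_
    rw [show -α - 1 = -(α + 1) by ring, Real.rpow_neg (hz z hz').le, div_eq_mul_inv]
  have hrest : ∫ z in a..b, p * z ^ (p - 1) * (-(z - 1) ^ (-α) / α)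
      = -(p / α) * ∫ z in a..b, z ^ (p - 1) * (z - 1) ^ (-α) := by
    rw [← intervalIntegral.integral_const_mul]
    congr 1 with z
    ring
  rw [hlhs, hparts, hrest, Real.rpow_neg (hz a left_mem_uIcc).le,
    Real.rpow_neg (hz b right_mem_uIcc).le]
  field_simp
  ring

theorem integrableOn_Ioo_rpow_sub_one_div_sub_one_rpow {a : ℝ} (b p α : ℝ) (ha : 1 < a) :
    IntegrableOn (fun z : ℝ => (z ^ p - 1) / (z - 1) ^ (α + 1)) (Ioo a b) := by
  have hz : ∀ z ∈ Icc a b, 0 < z - 1 := fun z hz => by linarith [hz.1]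
  refine (ContinuousOn.integrableOn_Icc ?_).mono_set Ioo_subset_Icc_self
  refine ContinuousOn.div ?_ ?_ fun z hz' => (Real.rpow_pos_of_pos (hz z hz') _).ne'
  · exact (continuousOn_id.rpow_const fun z hz' =>
      Or.inl (by simp only [id]; linarith [hz z hz'])).sub continuousOn_const
  · exact (continuousOn_id.sub continuousOn_const).rpow_const fun z hz' =>
      Or.inl (hz z hz').ne'

theorem integrableOn_Ioo_rpow_mul_one_sub_rpow {a b : ℝ} (q α : ℝ) (ha : 0 < a) (hb : b < 1) :
    IntegrableOn (fun z : ℝ => z ^ q * (1 - z) ^ (-α)) (Ioo a b) := by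
  refine (ContinuousOn.integrableOn_Icc ?_).mono_set Ioo_subset_Icc_self
  refine ContinuousOn.mul ?_ ?_
  · exact continuousOn_id.rpow_const fun z hz => Or.inl (by simp only [id]; linarith [hz.1])
  · exact (continuousOn_const.sub continuousOn_id).rpow_const fun z hz =>
      Or.inl (by simp only [Pi.sub_apply, id]; linarith [hz.2])

theorem setIntegral_Ioo_rpow_sub_one_div_sub_one_rpow {a b : ℝ} (p : ℝ) {α : ℝ} (hα : α ≠ 0)
    (ha : 1 < a) (hab : a ≤ b) :
    ∫ z in Ioo a b, (z ^ p - 1) / (z - 1) ^ (α + 1)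
      = (a ^ p - 1) / (α * (a - 1) ^ α) - (b ^ p - 1) / (α * (b - 1) ^ α) +
          p / α * ∫ w in Ioo b⁻¹ a⁻¹, w ^ (α - p - 1) * (1 - w) ^ (-α) := by
  have hb : 1 < b := ha.trans_le hab
  have hinv : ∀ w ∈ [[b⁻¹, a⁻¹]], 0 < w ∧ w ≤ 1 := fun w hw =>
    ⟨(lt_min (inv_pos.2 (by linarith)) (inv_pos.2 (by linarith))).trans_le hw.1,
      hw.2.trans (max_le (inv_le_one_of_one_le₀ hb.le) (inv_le_one_of_one_le₀ ha.le))⟩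
  rw [← integral_Ioc_eq_integral_Ioo, ← integral_of_le hab, ← integral_Ioc_eq_integral_Ioo,
    ← integral_of_le (inv_anti₀ (by linarith) hab), integral_rpow_sub_one_div_sub_one_rpow p hα ha hb,
    integral_comp_inv_div_sq (by linarith) (by linarith)]
  congr 2
  refine integral_congr fun w hw => ?_
  exact inv_rpow_mul_inv_sub_one_rpow_div_sq p α (hinv w hw).1 (hinv w hw).2

theorem statement12_general (α p x ε : ℝ) (hα1 : 0 < α)
    (hx : 0 < x) (hε : ε ∈ Set.Ioo 0 (1 / x)) :
    IntegrableOn (fun z : ℝ => (z ^ p - 1) / (z - 1) ^ (α + 1))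
      (Set.Ioo (1 + ε) ((x + 1) / x)) ∧
    IntegrableOn (fun z : ℝ => z ^ (α - p - 1) * (1 - z) ^ (-α))
      (Set.Ioo (x / (x + 1)) (1 / (1 + ε))) ∧
    ∫ z in Set.Ioo (1 + ε) ((x + 1) / x), (z ^ p - 1) / (z - 1) ^ (α + 1)
      = ((1 + ε) ^ p - 1) / (α * ε ^ α) + x ^ α / α - (x + 1) ^ p * x ^ (α - p) / α +
          (p / α) *
            ∫ z in Set.Ioo (x / (x + 1)) (1 / (1 + ε)), z ^ (α - p - 1) * (1 - z) ^ (-α) := by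
  obtain ⟨hε0, hεx⟩ := hε
  have hεx' : ε * x < 1 := (lt_div_iff₀ hx).mp hεx
  have hab : 1 + ε ≤ (x + 1) / x := by rw [le_div_iff₀ hx]; nlinarith
  have hupper : (x + 1) / x - 1 = x⁻¹ := by field_simp; ring
  refine ⟨integrableOn_Ioo_rpow_sub_one_div_sub_one_rpow _ p α (by linarith),
    integrableOn_Ioo_rpow_mul_one_sub_rpow _ α (by positivity)
      ((div_lt_one (by linarith)).2 (by linarith)), ?_⟩
  rw [one_div (1 + ε), ← inv_div (x + 1) x,
    setIntegral_Ioo_rpow_sub_one_div_sub_one_rpow p hα1.ne' (by linarith) hab,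
    add_sub_cancel_left, hupper, Real.inv_rpow hx.le, Real.div_rpow (by linarith) hx.le,
    Real.rpow_sub hx]
  field_simp
  ring

theorem statement12 (α p x ε : ℝ) (hα1 : 0 < α) (hα2 : α < 2) (hp : 0 < p)
    (hx : 0 < x) (hε : ε ∈ Set.Ioo 0 (1 / x)) :
    IntegrableOn (fun z : ℝ => (z ^ p - 1) / (z - 1) ^ (α + 1))
      (Set.Ioo (1 + ε) ((x + 1) / x)) ∧
    IntegrableOn (fun z : ℝ => z ^ (α - p - 1) * (1 - z) ^ (-α))
      (Set.Ioo (x / (x + 1)) (1 / (1 + ε))) ∧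
    ∫ z in Set.Ioo (1 + ε) ((x + 1) / x), (z ^ p - 1) / (z - 1) ^ (α + 1)
      = ((1 + ε) ^ p - 1) / (α * ε ^ α) + x ^ α / α - (x + 1) ^ p * x ^ (α - p) / α +
          (p / α) *
            ∫ z in Set.Ioo (x / (x + 1)) (1 / (1 + ε)), z ^ (α - p - 1) * (1 - z) ^ (-α) :=
  statement12_general α p x ε hα1 hx hε
end

section
/- Let α ∈ (0,2) and p > 0, and set d = 1. For every x ∈ (0,1), the principal-value limit Δ̂_1^{α/2} w_p(x) := lim_{ε→0+} ∫_{{y ∈ ℝ : ε < |y−x| < 1}} (w_p(y) − w_p(x)) · 𝒜(1,α) · |x−y|^{−1−α} dy exists and equals (𝒜(1,α)/α) · ( 2x^p − (x+1)^p + p·x^{p−α} · ( ∫_{x/(x+1)}^{1} (z^{α−p−1} − z^{p−1})/(1−z)^α dz − ∫_{0}^{x/(x+1)} z^{p−1}/(1−z)^α dz ) ), where both inner Lebesgue integrals are finite. -/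
open MeasureTheory Filter

/-!
Writing `w(t) = max t 0 ^ p` and `ψ(u) = w(x + u) + w(x - u) - 2 w(x)`, the truncated integral
over `ε < |t - x| < 1` is `∫_ε^1 ψ(u) u^(-1-α) du`. One integration by parts leaves the boundary
terms `ψ(ε) ε^(-α) = O(ε^(2-α))` and `ψ(1) = (x + 1)^p - 2 x^p`, plus `p/α` times
`∫_ε^1 (x+u)^(p-1) u^(-α) du - ∫_ε^x (x-u)^(p-1) u^(-α) du`. The substitutions `u = x/z - x` and
`u = x - x z` turn these into integrals of `z^(α-p-1) (1-z)^(-α)` over `(x/(x+1), x/(x+ε))` and of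
`z^(p-1) (1-z)^(-α)` over `(0, 1 - ε/x)`. Their difference converges as `ε → 0`: on the common
range the combined integrand `(z^(α-p-1) - z^(p-1)) (1-z)^(-α) = O((1-z)^(1-α))` is integrable
because `α < 2`, and the two upper limits differ by `O(ε²)` on a stretch where
`(1-z)^(-α) = O(ε^(-α))`.
-/

open Set Filter Topology MeasureTheory intervalIntegral

theorem norm_euclideanSpace_fin_one (y : EuclideanSpace ℝ (Fin 1)) : ‖y‖ = |y 0| := by
  rw [EuclideanSpace.norm_eq, Fin.sum_univ_one, Real.norm_eq_abs, Real.sqrt_sq_eq_abs, abs_abs]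

theorem setIntegral_annulus_euclideanSpace_fin_one (g : ℝ → ℝ) (x ε r : ℝ) :
    ∫ y in {y : EuclideanSpace ℝ (Fin 1) | ε < ‖y - EuclideanSpace.single 0 x‖ ∧
        ‖y - EuclideanSpace.single 0 x‖ < r}, g (y 0) =
      ∫ t in {t : ℝ | ε < |t - x| ∧ |t - x| < r}, g t := by
  let e : EuclideanSpace ℝ (Fin 1) ≃ᵐ ℝ :=
    (MeasurableEquiv.toLp 2 (Fin 1 → ℝ)).symm.trans (MeasurableEquiv.funUnique (Fin 1) ℝ)
  have he : MeasurePreserving e := (volume_preserving_funUnique (Fin 1) ℝ).comp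
    (EuclideanSpace.volume_preserving_symm_measurableEquiv_toLp (Fin 1))
  have hset : {y : EuclideanSpace ℝ (Fin 1) | ε < ‖y - EuclideanSpace.single 0 x‖ ∧
      ‖y - EuclideanSpace.single 0 x‖ < r} = e ⁻¹' {t | ε < |t - x| ∧ |t - x| < r} := by
    ext y
    simp [e, norm_euclideanSpace_fin_one]
  rw [hset]
  exact he.setIntegral_preimage_emb e.measurableEmbedding g _

theorem setIntegral_annulus_wp_eq (p A r x ε : ℝ) :
    ∫ y in {y : EuclideanSpace ℝ (Fin 1) | ε < ‖y - EuclideanSpace.single 0 x‖ ∧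
        ‖y - EuclideanSpace.single 0 x‖ < 1},
      (wp 1 one_pos p y - wp 1 one_pos p (EuclideanSpace.single 0 x)) * A *
        ‖EuclideanSpace.single 0 x - y‖ ^ r =
      ∫ t in {t : ℝ | ε < |t - x| ∧ |t - x| < 1},
        (max t 0 ^ p - max x 0 ^ p) * A * |x - t| ^ r := by
  rw [← setIntegral_annulus_euclideanSpace_fin_one]
  congr with y
  simp [wp, norm_euclideanSpace_fin_one]

theorem setIntegral_annulus_eq_intervalIntegral {f : ℝ → ℝ} {x ε r : ℝ} (hε : 0 ≤ ε)
    (hεr : ε ≤ r) (hl : IntervalIntegrable f volume (x - r) (x - ε))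
    (hr : IntervalIntegrable f volume (x + ε) (x + r)) :
    ∫ t in {t | ε < |t - x| ∧ |t - x| < r}, f t = ∫ u in ε..r, (f (x + u) + f (x - u)) := by
  have hset : {t | ε < |t - x| ∧ |t - x| < r} =
      Ioo (x - r) (x - ε) ∪ Ioo (x + ε) (x + r) := by
    ext t
    simp only [mem_ofPred_eq, mem_union, mem_Ioo, lt_abs, abs_lt]
    constructor
    · rintro ⟨h | h, h'⟩
      · right; constructor <;> linarith
      · left; constructor <;> linarith
    · rintro (h | h)
      · exact ⟨Or.inr (by linarith), by linarith, by linarith⟩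
      · exact ⟨Or.inl (by linarith), by linarith, by linarith⟩
  have hdisj : Disjoint (Ioo (x - r) (x - ε)) (Ioo (x + ε) (x + r)) :=
    disjoint_left.2 fun t h₁ h₂ => by linarith [h₁.2, h₂.1]
  rw [hset, setIntegral_union hdisj measurableSet_Ioo
      ((intervalIntegrable_iff_integrableOn_Ioo_of_le (by linarith)).1 hl)
      ((intervalIntegrable_iff_integrableOn_Ioo_of_le (by linarith)).1 hr),
    ← integral_Ioc_eq_integral_Ioo, ← integral_Ioc_eq_integral_Ioo,
    ← integral_of_le (by linarith), ← integral_of_le (by linarith),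
    intervalIntegral.integral_add (by simpa using hr.comp_add_left x)
      (by simpa using (hl.comp_sub_left x).symm),
    integral_comp_add_left, integral_comp_sub_left, add_comm]

theorem setIntegral_annulus_posPart_rpow {α p x ε : ℝ} (hp : 0 < p) (hε : 0 < ε) (hε1 : ε ≤ 1)
    (A : ℝ) :
    ∫ t in {t : ℝ | ε < |t - x| ∧ |t - x| < 1},
        (max t 0 ^ p - max x 0 ^ p) * A * |x - t| ^ (-(1 + α)) =
      A * ∫ u in ε..1,
        (max (x + u) 0 ^ p + max (x - u) 0 ^ p - 2 * max x 0 ^ p) * u ^ (-(1 + α)) := by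
  have hw : Continuous fun t : ℝ => max t 0 ^ p :=
    (continuous_id.max continuous_const).rpow_const fun _ => Or.inr hp.le
  have hcont : ContinuousOn
      (fun t : ℝ => (max t 0 ^ p - max x 0 ^ p) * A * |x - t| ^ (-(1 + α))) {x}ᶜ :=
    ((hw.sub continuous_const).mul continuous_const).continuousOn.mul
      ((continuous_const.sub continuous_id).abs.continuousOn.rpow_const fun t ht =>
        Or.inl (abs_ne_zero.2 (sub_ne_zero.2 (Ne.symm ht))))
  have hint : ∀ {c d}, x ∉ uIcc c d → IntervalIntegrable
      (fun t : ℝ => (max t 0 ^ p - max x 0 ^ p) * A * |x - t| ^ (-(1 + α))) volume c d :=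
    fun h => (hcont.mono fun t ht (hxt : t = x) => h (hxt ▸ ht)).intervalIntegrable
  rw [setIntegral_annulus_eq_intervalIntegral hε.le hε1
      (hint fun h => by rw [uIcc_of_le (by linarith)] at h; linarith [h.2])
      (hint fun h => by rw [uIcc_of_le (by linarith)] at h; linarith [h.1]),
    ← intervalIntegral.integral_const_mul]
  refine integral_congr fun u hu => ?_
  rw [uIcc_of_le hε1] at hu
  have hu0 : 0 < u := hε.trans_le hu.1
  rw [show x - (x + u) = -u by ring, show x - (x - u) = u by ring, abs_neg, abs_of_pos hu0]
  ring

theorem integral_mul_rpow_neg_one_add {h h' : ℝ → ℝ} {a b α : ℝ} (hα : α ≠ 0) (ha : 0 < a)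
    (hab : a ≤ b) (hc : ContinuousOn h (Icc a b)) (hd : ∀ u ∈ Ioo a b, HasDerivAt h (h' u) u)
    (hi : IntervalIntegrable h' volume a b) :
    ∫ u in a..b, h u * u ^ (-(1 + α)) =
      (h a * a ^ (-α) - h b * b ^ (-α)) / α + (∫ u in a..b, h' u * u ^ (-α)) / α := by
  have hv : ∀ u ∈ Icc a b, HasDerivAt (fun u => -u ^ (-α) / α) (u ^ (-(1 + α))) u := by
    intro u hu
    have hu : u ≠ 0 := (ha.trans_le hu.1).ne'
    refine ((Real.hasDerivAt_rpow_const (p := -α) (Or.inl hu)).neg.div_const α).congr_deriv ?_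
    rw [show -(1 + α) = -α - 1 by ring]
    field_simp
  have hv' : ContinuousOn (fun u : ℝ => u ^ (-(1 + α))) (Icc a b) :=
    continuousOn_id.rpow_const fun u hu => Or.inl (ha.trans_le hu.1).ne'
  have hIoo : Ioo (min a b) (max a b) = Ioo a b := by rw [min_eq_left hab, max_eq_right hab]
  rw [integral_mul_deriv_eq_deriv_mul_of_hasDeriv_right (v := fun u => -u ^ (-α) / α)
    (by rwa [uIcc_of_le hab])
    (by rw [uIcc_of_le hab]; exact fun u hu => (hv u hu).continuousAt.continuousWithinAt)
    (by rw [hIoo]; exact fun u hu => (hd u hu).hasDerivWithinAt)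
    (by rw [hIoo]; exact fun u hu => (hv u (Ioo_subset_Icc_self hu)).hasDerivWithinAt)
    hi (hv'.intervalIntegrable_of_Icc hab)]
  simp only [mul_div_assoc', mul_neg, intervalIntegral.integral_neg, intervalIntegral.integral_div]
  ring

theorem integral_posPart_rpow_secondDiff {α p x ε : ℝ} (hα : α ≠ 0) (hp : 0 < p) (hε : 0 < ε)
    (hεx : ε < x) (hx1 : x ≤ 1) :
    ∫ u in ε..1, (max (x + u) 0 ^ p + max (x - u) 0 ^ p - 2 * max x 0 ^ p) * u ^ (-(1 + α)) =
      ((x + ε) ^ p + (x - ε) ^ p - 2 * x ^ p) * ε ^ (-α) / α + (2 * x ^ p - (x + 1) ^ p) / α +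
        p / α * ((∫ u in ε..1, (x + u) ^ (p - 1) * u ^ (-α)) -
          ∫ u in ε..x, (x - u) ^ (p - 1) * u ^ (-α)) := by
  have hε1 : ε ≤ 1 := by linarith
  have hpow : ContinuousOn (fun u : ℝ => u ^ (-(1 + α))) (Icc ε 1) :=
    continuousOn_id.rpow_const fun u hu => Or.inl (hε.trans_le hu.1).ne'
  have hplus : Continuous fun u : ℝ => (x + u) ^ p - 2 * x ^ p := by
    have : Continuous fun u : ℝ => x + u := continuous_const.add continuous_id
    exact (this.rpow_const fun _ => Or.inr hp.le).sub continuous_const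
  have hminus : Continuous fun u : ℝ => max (x - u) 0 ^ p :=
    ((continuous_const.sub continuous_id).max continuous_const).rpow_const fun _ => Or.inr hp.le
  have hplus_int : IntervalIntegrable (fun u => ((x + u) ^ p - 2 * x ^ p) * u ^ (-(1 + α)))
      volume ε 1 :=
    (hplus.continuousOn.mul hpow).intervalIntegrable_of_Icc hε1
  have hminus_int : ∀ {c d}, Icc c d ⊆ Icc ε 1 → c ≤ d →
      IntervalIntegrable (fun u => max (x - u) 0 ^ p * u ^ (-(1 + α))) volume c d :=
    fun hsub hcd => ((hminus.continuousOn.mul hpow).mono hsub).intervalIntegrable_of_Icc hcd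
  have hsplit : ∀ u ∈ uIcc ε 1,
      (max (x + u) 0 ^ p + max (x - u) 0 ^ p - 2 * max x 0 ^ p) * u ^ (-(1 + α)) =
        ((x + u) ^ p - 2 * x ^ p) * u ^ (-(1 + α)) + max (x - u) 0 ^ p * u ^ (-(1 + α)) := by
    intro u hu
    rw [uIcc_of_le hε1] at hu
    rw [max_eq_left (show 0 ≤ x + u by linarith [hu.1]), max_eq_left (show 0 ≤ x by linarith)]
    ring
  have hright : ∫ u in x..1, max (x - u) 0 ^ p * u ^ (-(1 + α)) = 0 := by
    rw [integral_congr (g := fun _ => 0) fun u hu => ?_, intervalIntegral.integral_zero]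
    rw [uIcc_of_le hx1] at hu
    simp [max_eq_right (by linarith [hu.1] : x - u ≤ 0), Real.zero_rpow hp.ne']
  have hleft : ∫ u in ε..x, max (x - u) 0 ^ p * u ^ (-(1 + α)) =
      ∫ u in ε..x, (x - u) ^ p * u ^ (-(1 + α)) :=
    integral_congr fun u hu => by
      rw [uIcc_of_le hεx.le] at hu
      rw [max_eq_left (by linarith [hu.2])]
  have hibp_plus := integral_mul_rpow_neg_one_add (h := fun u => (x + u) ^ p - 2 * x ^ p)
    (h' := fun u => p * (x + u) ^ (p - 1)) hα hε hε1 hplus.continuousOn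
    (fun u hu => (((hasDerivAt_id u).const_add x).rpow_const
      (Or.inl (by linarith [hu.1] : x + u ≠ 0))).sub_const _ |>.congr_deriv (by simp))
    ((continuousOn_const.mul ((continuousOn_const.add continuousOn_id).rpow_const
      fun u hu => Or.inl (by linarith [hu.1] : x + u ≠ 0))).intervalIntegrable_of_Icc hε1)
  have hibp_minus := integral_mul_rpow_neg_one_add (h := fun u => (x - u) ^ p)
    (h' := fun u => -(p * (x - u) ^ (p - 1))) hα hε hεx.le
    ((continuous_const.sub continuous_id).rpow_const fun _ => Or.inr hp.le).continuousOn
    (fun u hu => (((hasDerivAt_id u).const_sub x).rpow_const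
      (Or.inl (by linarith [hu.2] : x - u ≠ 0))).congr_deriv (by simp))
    (by
      have h := ((intervalIntegral.intervalIntegrable_rpow' (r := p - 1) (a := 0)
        (b := x - ε) (by linarith)).comp_sub_left x).symm.const_mul p
      simp only [sub_zero, sub_sub_cancel] at h
      exact h.neg)
  rw [integral_congr hsplit,
    intervalIntegral.integral_add hplus_int (hminus_int subset_rfl hε1),
    ← integral_add_adjacent_intervals (b := x)
      (hminus_int (Icc_subset_Icc_right hx1) hεx.le)
      (hminus_int (Icc_subset_Icc_left hεx.le) hx1),
    hright, hleft, hibp_plus, hibp_minus]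
  simp only [neg_mul, mul_assoc, intervalIntegral.integral_neg,
    intervalIntegral.integral_const_mul]
  rw [sub_self, Real.zero_rpow hp.ne', Real.one_rpow, add_comm x 1]
  ring

theorem integral_add_rpow_mul_rpow_neg_eq {α p x ε : ℝ} (hx : 0 < x) (hε : 0 < ε) :
    ∫ u in ε..1, (x + u) ^ (p - 1) * u ^ (-α) =
      x ^ (p - α) * ∫ z in x / (x + 1)..x / (x + ε), z ^ (α - p - 1) / (1 - z) ^ α := by
  set a := x / (x + 1)
  set b := x / (x + ε)
  have ha : 0 < a := by positivity
  have hb : b < 1 := (div_lt_one (by positivity)).2 (by linarith)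
  have ha1 : a < 1 := (div_lt_one (by positivity)).2 (by linarith)
  have hb0 : 0 < b := by positivity
  have hmem : ∀ z ∈ uIcc a b, 0 < z ∧ z < 1 := fun z hz =>
    ⟨(lt_min ha hb0).trans_le hz.1, hz.2.trans_lt (max_lt ha1 hb)⟩
  have hsub := integral_comp_mul_deriv' (a := a) (b := b) (f := fun z => x * z⁻¹ - x)
    (f' := fun z => x * -(z ^ 2)⁻¹) (g := fun u => (x + u) ^ (p - 1) * u ^ (-α))
    (fun z hz => ((hasDerivAt_inv (hmem z hz).1.ne').const_mul x).sub_const x)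
    (fun z hz => by
      have := (hmem z hz).1.ne'
      exact ContinuousAt.continuousWithinAt (by fun_prop (disch := positivity)))
    (by
      rintro _ ⟨z, hz, rfl⟩
      obtain ⟨hz0, hz1⟩ := hmem z hz
      have hu : 0 < x * z⁻¹ - x := by
        rw [sub_pos, lt_mul_iff_one_lt_right hx]; exact (one_lt_inv₀ hz0).2 hz1
      have hxu : x + (x * z⁻¹ - x) ≠ 0 := by linarith
      exact (((continuousAt_const.add continuousAt_id).rpow_const (Or.inl hxu)).mul
        (continuousAt_id.rpow_const (Or.inl hu.ne'))).continuousWithinAt)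
  have hfa : x * a⁻¹ - x = 1 := by simp only [a]; field_simp; ring
  have hfb : x * b⁻¹ - x = ε := by simp only [b]; field_simp; ring
  simp only [hfa, hfb, Function.comp_apply, mul_neg, intervalIntegral.integral_neg] at hsub
  rw [integral_symm, ← hsub, neg_neg, ← intervalIntegral.integral_const_mul]
  refine integral_congr fun z hz => ?_
  obtain ⟨hz0, hz1⟩ := hmem z hz
  have h1z : 0 < 1 - z := by linarith
  rw [show x + (x * z⁻¹ - x) = x * z⁻¹ by ring,
    show x * z⁻¹ - x = x * (1 - z) * z⁻¹ by field_simp,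
    Real.mul_rpow hx.le (inv_pos.2 hz0).le, Real.mul_rpow (by positivity) (inv_pos.2 hz0).le,
    Real.mul_rpow hx.le h1z.le, Real.inv_rpow hz0.le, Real.inv_rpow hz0.le,
    Real.rpow_sub_one hx.ne', Real.rpow_sub_one hz0.ne', Real.rpow_sub_one hz0.ne',
    Real.rpow_sub hx, Real.rpow_sub hz0, Real.rpow_neg hx.le, Real.rpow_neg hz0.le,
    Real.rpow_neg h1z.le]
  field_simp

theorem integral_sub_rpow_mul_rpow_neg_eq {α p x ε : ℝ} (hx : 0 < x) (hε : 0 < ε)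
    (hεx : ε < x) :
    ∫ u in ε..x, (x - u) ^ (p - 1) * u ^ (-α) =
      x ^ (p - α) * ∫ z in 0..1 - ε / x, z ^ (p - 1) / (1 - z) ^ α := by
  have hsub := integral_comp_sub_mul (a := 0) (b := 1 - ε / x)
    (fun u => (x - u) ^ (p - 1) * u ^ (-α)) hx.ne' x
  rw [mul_zero, sub_zero, show x - x * (1 - ε / x) = ε by field_simp; ring] at hsub
  rw [← mul_inv_cancel_left₀ hx.ne' (∫ u in ε..x, _), ← smul_eq_mul x⁻¹, ← hsub,
    ← intervalIntegral.integral_const_mul, ← intervalIntegral.integral_const_mul]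
  refine integral_congr_ae (Eventually.of_forall fun z hz => ?_)
  rw [uIoc_of_le (sub_nonneg.2 ((div_le_one hx).2 hεx.le))] at hz
  have hz0 : 0 < z := hz.1
  have h1z : 0 < 1 - z := by
    have := hz.2; have : 0 < ε / x := by positivity
    linarith
  rw [show x - (x - x * z) = x * z by ring, show x - x * z = x * (1 - z) by ring,
    Real.mul_rpow hx.le hz0.le, Real.mul_rpow hx.le h1z.le,
    Real.rpow_sub_one hx.ne', Real.rpow_sub hx, Real.rpow_neg hx.le, Real.rpow_neg h1z.le]
  field_simp

theorem continuousOn_rpow_div_one_sub_rpow (r α : ℝ) :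
    ContinuousOn (fun z : ℝ => z ^ r / (1 - z) ^ α) (Ioo 0 1) := fun _ hz =>
  ((continuousAt_id.rpow_const (Or.inl hz.1.ne')).div
    ((continuousAt_const.sub continuousAt_id).rpow_const (Or.inl (sub_pos.2 hz.2).ne'))
    (Real.rpow_pos_of_pos (sub_pos.2 hz.2) α).ne').continuousWithinAt

theorem intervalIntegrable_rpow_div_one_sub_rpow (r α : ℝ) {c d : ℝ} (hc : c ∈ Ioo 0 1)
    (hd : d ∈ Ioo 0 1) :
    IntervalIntegrable (fun z : ℝ => z ^ r / (1 - z) ^ α) volume c d :=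
  ((continuousOn_rpow_div_one_sub_rpow r α).mono
    (ordConnected_Ioo.uIcc_subset hc hd)).intervalIntegrable

theorem integrableOn_div_one_sub_rpow {f : ℝ → ℝ} {a α : ℝ} {K : NNReal} (hα : α < 2)
    (hf : LipschitzOnWith K f (Icc a 1)) (hf1 : f 1 = 0) :
    IntegrableOn (fun z => f z / (1 - z) ^ α) (Ioo a 1) := by
  have hdom : IntegrableOn (fun z : ℝ => K * (1 - z) ^ (1 - α)) (Ioo a 1) := by
    have h := ((intervalIntegral.intervalIntegrable_rpow' (r := 1 - α) (a := 0) (b := 1 - a)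
      (by linarith)).comp_sub_left 1).const_mul (K : ℝ)
    rw [sub_zero, sub_sub_cancel] at h
    exact h.symm.1.mono_set Ioo_subset_Ioc_self
  refine hdom.mono' (ContinuousOn.aestronglyMeasurable (fun z hz => ?_) measurableSet_Ioo) ?_
  · have h1z : 0 < 1 - z := sub_pos.2 hz.2
    exact ((hf.continuousOn.mono Ioo_subset_Icc_self) z hz).div
      ((continuousAt_const.sub continuousAt_id).rpow_const (Or.inl h1z.ne')).continuousWithinAt
      (Real.rpow_pos_of_pos h1z α).ne'
  · filter_upwards [ae_restrict_mem measurableSet_Ioo] with z hz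
    have h1z : 0 < 1 - z := sub_pos.2 hz.2
    have hlip : |f z| ≤ K * (1 - z) := by
      have := hf.dist_le_mul z (Ioo_subset_Icc_self hz) 1 ⟨hz.1.le.trans hz.2.le, le_rfl⟩
      rwa [hf1, Real.dist_eq, Real.dist_eq, sub_zero, abs_sub_comm, abs_of_pos h1z] at this
    rw [Real.norm_eq_abs, abs_div, abs_of_pos (Real.rpow_pos_of_pos h1z α), Real.rpow_sub h1z,
      Real.rpow_one, ← mul_div_assoc]
    gcongr

theorem integrableOn_rpow_sub_rpow_div_one_sub_rpow {a r s α : ℝ} (ha : 0 < a) (hα : α < 2) :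
    IntegrableOn (fun z : ℝ => (z ^ r - z ^ s) / (1 - z) ^ α) (Ioo a 1) := by
  have hC : ContDiffOn ℝ 1 (fun z : ℝ => z ^ r - z ^ s) (Icc a 1) :=
    (contDiffOn_id.rpow_const_of_ne fun z hz => (ha.trans_le hz.1).ne').sub
      (contDiffOn_id.rpow_const_of_ne fun z hz => (ha.trans_le hz.1).ne')
  obtain ⟨K, hK⟩ := hC.exists_lipschitzOnWith one_ne_zero (convex_Icc a 1) isCompact_Icc
  exact integrableOn_div_one_sub_rpow hα hK (by simp)

theorem integrableOn_rpow_div_one_sub_rpow {a r α : ℝ} (ha : a < 1) (hr : -1 < r)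
    (hα : 0 ≤ α) :
    IntegrableOn (fun z : ℝ => z ^ r / (1 - z) ^ α) (Ioo 0 a) := by
  have hdom : IntegrableOn (fun z : ℝ => z ^ r / (1 - a) ^ α) (Ioo 0 a) :=
    ((intervalIntegral.intervalIntegrable_rpow' hr).div_const _).1.mono_set Ioo_subset_Ioc_self
  refine hdom.mono' (((continuousOn_rpow_div_one_sub_rpow r α).mono fun z hz =>
    ⟨hz.1, hz.2.trans ha⟩).aestronglyMeasurable measurableSet_Ioo) ?_
  filter_upwards [ae_restrict_mem measurableSet_Ioo] with z hz
  have h1z : 0 < 1 - z := by linarith [hz.2]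
  have hzr : 0 ≤ z ^ r := Real.rpow_nonneg hz.1.le r
  rw [Real.norm_eq_abs, abs_of_nonneg (div_nonneg hzr (Real.rpow_nonneg h1z.le α))]
  exact div_le_div_of_nonneg_left hzr (Real.rpow_pos_of_pos (sub_pos.2 ha) α)
    (Real.rpow_le_rpow (sub_pos.2 ha).le (by linarith [hz.2]) hα)

theorem integral_add_rpow_sub_integral_sub_rpow_eq {α p x ε : ℝ} (hα : 0 ≤ α) (hp : 0 < p)
    (hx : 0 < x) (hε : 0 < ε) (hεa : ε < x / (x + 1)) :
    (∫ u in ε..1, (x + u) ^ (p - 1) * u ^ (-α)) - ∫ u in ε..x, (x - u) ^ (p - 1) * u ^ (-α) =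
      x ^ (p - α) *
        ((∫ z in x / (x + 1)..x / (x + ε), (z ^ (α - p - 1) - z ^ (p - 1)) / (1 - z) ^ α) +
          (∫ z in 1 - ε / x..x / (x + ε), z ^ (p - 1) / (1 - z) ^ α) -
            ∫ z in 0..x / (x + 1), z ^ (p - 1) / (1 - z) ^ α) := by
  set a := x / (x + 1)
  set b := x / (x + ε)
  set c := 1 - ε / x
  have ha0 : 0 < a := by positivity
  have hεx : ε < x := hεa.trans ((div_lt_iff₀ (by linarith)).2 (by nlinarith))
  have hac : a < c := by
    have : ε / x < 1 / (x + 1) := by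
      rw [div_lt_div_iff₀ hx (by linarith)]; rw [lt_div_iff₀ (by linarith)] at hεa; linarith
    simp only [a, c]
    rw [show x / (x + 1) = 1 - 1 / (x + 1) by field_simp; ring]
    linarith
  have hcb : c ≤ b := by
    rw [← sub_nonneg, show b - c = ε ^ 2 / (x * (x + ε)) by simp only [b, c]; field_simp; ring]
    positivity
  have hb1 : b < 1 := (div_lt_one (by positivity)).2 (by linarith)
  have ha : a ∈ Ioo 0 1 := ⟨ha0, hac.trans_le hcb |>.trans hb1⟩
  have hb : b ∈ Ioo 0 1 := ⟨by positivity, hb1⟩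
  have hc : c ∈ Ioo 0 1 := ⟨ha0.trans hac, hcb.trans_lt hb1⟩
  have hg1 : ∫ z in a..b, (z ^ (α - p - 1) - z ^ (p - 1)) / (1 - z) ^ α =
      (∫ z in a..b, z ^ (α - p - 1) / (1 - z) ^ α) - ∫ z in a..b, z ^ (p - 1) / (1 - z) ^ α := by
    simp only [sub_div]
    exact intervalIntegral.integral_sub (intervalIntegrable_rpow_div_one_sub_rpow _ _ ha hb)
      (intervalIntegrable_rpow_div_one_sub_rpow _ _ ha hb)
  have hsplit : ∫ z in 0..c, z ^ (p - 1) / (1 - z) ^ α =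
      (∫ z in 0..a, z ^ (p - 1) / (1 - z) ^ α) + ∫ z in a..c, z ^ (p - 1) / (1 - z) ^ α :=
    (integral_add_adjacent_intervals
      ((intervalIntegrable_iff_integrableOn_Ioo_of_le ha0.le).2
        (integrableOn_rpow_div_one_sub_rpow ha.2 (by linarith) hα))
      (intervalIntegrable_rpow_div_one_sub_rpow _ _ ha hc)).symm
  have hgap := integral_interval_sub_left
    (intervalIntegrable_rpow_div_one_sub_rpow (p - 1) α ha hb)
    (intervalIntegrable_rpow_div_one_sub_rpow (p - 1) α ha hc)
  rw [integral_add_rpow_mul_rpow_neg_eq hx hε, integral_sub_rpow_mul_rpow_neg_eq hx hε hεx,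
    hsplit, hg1, ← hgap]
  ring

theorem setIntegral_annulus_wp_eq_of_lt {α p x ε : ℝ} (hα : 0 < α) (hp : 0 < p) (hx0 : 0 < x)
    (hx1 : x < 1) (hε : ε ∈ Ioo 0 (x / (x + 1))) :
    ∫ y in {y : EuclideanSpace ℝ (Fin 1) | ε < ‖y - EuclideanSpace.single 0 x‖ ∧
        ‖y - EuclideanSpace.single 0 x‖ < 1},
      (wp 1 one_pos p y - wp 1 one_pos p (EuclideanSpace.single 0 x)) * frakA 1 α *
        ‖EuclideanSpace.single 0 x - y‖ ^ (-(1 + α)) =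
      frakA 1 α / α * (((x + ε) ^ p + (x - ε) ^ p - 2 * x ^ p) * ε ^ (-α) +
        (2 * x ^ p - (x + 1) ^ p) + p * x ^ (p - α) *
          ((∫ z in x / (x + 1)..x / (x + ε), (z ^ (α - p - 1) - z ^ (p - 1)) / (1 - z) ^ α) +
            (∫ z in 1 - ε / x..x / (x + ε), z ^ (p - 1) / (1 - z) ^ α) -
              ∫ z in 0..x / (x + 1), z ^ (p - 1) / (1 - z) ^ α)) := by
  obtain ⟨hε0, hεa⟩ := hε
  have hεx : ε < x := hεa.trans ((div_lt_iff₀ (by linarith)).2 (by nlinarith))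
  rw [setIntegral_annulus_wp_eq, setIntegral_annulus_posPart_rpow hp hε0 (by linarith),
    integral_posPart_rpow_secondDiff hα.ne' hp hε0 hεx hx1.le,
    integral_add_rpow_sub_integral_sub_rpow_eq hα.le hp hx0 hε0 hεa]
  field_simp

theorem tendsto_rpow_nhdsGT_zero {r : ℝ} (hr : 0 < r) :
    Tendsto (fun ε : ℝ => ε ^ r) (𝓝[>] 0) (𝓝 0) := by
  have h := (Real.continuousAt_rpow_const 0 r (Or.inr hr.le)).tendsto
  rw [Real.zero_rpow hr.ne'] at h
  exact h.mono_left nhdsWithin_le_nhds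

theorem abs_add_add_sub_two_mul_le {f f' : ℝ → ℝ} {x r : ℝ} {K : NNReal}
    (hf : ∀ t ∈ Icc (x - r) (x + r), HasDerivAt f (f' t) t)
    (hK : LipschitzOnWith K f' (Icc (x - r) (x + r))) {u : ℝ} (hu : u ∈ Icc 0 r) :
    |f (x + u) + f (x - u) - 2 * f x| ≤ 2 * K * u ^ 2 := by
  have hmem : ∀ s ∈ Icc 0 u, x + s ∈ Icc (x - r) (x + r) ∧ x - s ∈ Icc (x - r) (x + r) :=
    fun s hs => by
      constructor <;> constructor <;> linarith [hs.1, hs.2, hu.1, hu.2]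
  have hderiv : ∀ s ∈ Icc 0 u, HasDerivWithinAt (fun s => f (x + s) + f (x - s))
      (f' (x + s) - f' (x - s)) (Icc 0 u) s := fun s hs => by
    have h₁ := (hf _ (hmem s hs).1).comp s ((hasDerivAt_id s).const_add x)
    have h₂ := (hf _ (hmem s hs).2).comp s ((hasDerivAt_id s).const_sub x)
    exact ((h₁.add h₂).congr_deriv (by simp [sub_eq_add_neg])).hasDerivWithinAt
  have hbound : ∀ s ∈ Icc 0 u, ‖f' (x + s) - f' (x - s)‖ ≤ 2 * K * u := fun s hs => by
    have := hK.dist_le_mul _ (hmem s hs).1 _ (hmem s hs).2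
    rw [Real.dist_eq, Real.dist_eq, show x + s - (x - s) = 2 * s by ring,
      abs_of_nonneg (show 0 ≤ 2 * s by linarith [hs.1])] at this
    rw [Real.norm_eq_abs]
    nlinarith [hs.2, K.2]
  have := (convex_Icc 0 u).norm_image_sub_le_of_norm_hasDerivWithin_le hderiv hbound
    ⟨le_rfl, hu.1⟩ ⟨hu.1, le_rfl⟩
  rw [add_zero, sub_zero, ← two_mul, Real.norm_eq_abs, Real.norm_eq_abs, sub_zero,
    abs_of_nonneg hu.1] at this
  linarith

theorem tendsto_rpow_secondDiff_mul_rpow_neg {α p x : ℝ} (hα : α < 2) (hx : 0 < x) :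
    Tendsto (fun ε : ℝ => ((x + ε) ^ p + (x - ε) ^ p - 2 * x ^ p) * ε ^ (-α)) (𝓝[>] 0)
      (𝓝 0) := by
  have hI : ∀ t ∈ Icc (x - x / 2) (x + x / 2), 0 < t := fun t ht => by linarith [ht.1]
  have hC : ContDiffOn ℝ 1 (fun t : ℝ => p * t ^ (p - 1)) (Icc (x - x / 2) (x + x / 2)) :=
    contDiffOn_const.mul (contDiffOn_id.rpow_const_of_ne fun t ht => (hI t ht).ne')
  obtain ⟨K, hK⟩ := hC.exists_lipschitzOnWith one_ne_zero (convex_Icc _ _) isCompact_Icc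
  refine squeeze_zero_norm' ?_ (by
    simpa using (tendsto_rpow_nhdsGT_zero (by linarith : 0 < 2 - α)).const_mul (2 * (K : ℝ)))
  filter_upwards [Ioo_mem_nhdsGT (by positivity : (0 : ℝ) < x / 2)] with ε hε
  have := abs_add_add_sub_two_mul_le (f := fun t => t ^ p)
    (fun t ht => Real.hasDerivAt_rpow_const (Or.inl (hI t ht).ne')) hK ⟨hε.1.le, hε.2.le⟩
  rw [Real.norm_eq_abs, abs_mul, abs_of_pos (Real.rpow_pos_of_pos hε.1 _),
    Real.rpow_sub hε.1, Real.rpow_two, div_eq_mul_inv, ← Real.rpow_neg hε.1.le, ← mul_assoc]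
  exact mul_le_mul_of_nonneg_right this (Real.rpow_pos_of_pos hε.1 _).le

theorem tendsto_integral_rpow_div_one_sub_rpow_gap {α p x : ℝ} (hα0 : 0 ≤ α) (hα : α < 2)
    (hx : 0 < x) :
    Tendsto (fun ε => ∫ z in 1 - ε / x..x / (x + ε), z ^ (p - 1) / (1 - z) ^ α) (𝓝[>] 0)
      (𝓝 0) := by
  obtain ⟨M, hM⟩ := isCompact_Icc.exists_bound_of_continuousOn (f := fun z : ℝ => z ^ (p - 1))
    (s := Icc (1 / 2) 1)
    (continuousOn_id.rpow_const fun z hz => Or.inl (by linarith [hz.1] : (0 : ℝ) < z).ne')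
  refine squeeze_zero_norm' ?_ (by
    simpa using (tendsto_rpow_nhdsGT_zero (by linarith : 0 < 2 - α)).const_mul
      (M * (x + 1) ^ α / x ^ 2))
  filter_upwards [Ioo_mem_nhdsGT (by positivity : (0 : ℝ) < min (x / 2) 1)] with ε hε
  obtain ⟨hε0, hεm⟩ := hε
  have hεx : ε < x / 2 := hεm.trans_le (min_le_left _ _)
  have hε1 : ε < 1 := hεm.trans_le (min_le_right _ _)
  have hxε : 0 < x + ε := by linarith
  have hc : 1 / 2 ≤ 1 - ε / x := by
    rw [le_sub_comm, div_le_iff₀ hx]; linarith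
  have hgap : x / (x + ε) - (1 - ε / x) = ε ^ 2 / (x * (x + ε)) := by field_simp; ring
  have hcb : 1 - ε / x ≤ x / (x + ε) := by
    rw [← sub_nonneg, hgap]; positivity
  have h1b : ε / (x + 1) ≤ 1 - x / (x + ε) := by
    rw [show 1 - x / (x + ε) = ε / (x + ε) by field_simp; ring]
    exact div_le_div_of_nonneg_left hε0.le hxε (by linarith)
  have hδ : 0 < ε / (x + 1) := by positivity
  have hM0 : 0 ≤ M := (norm_nonneg _).trans (hM 1 ⟨by norm_num, le_rfl⟩)
  have hpt : ∀ z ∈ uIoc (1 - ε / x) (x / (x + ε)),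
      ‖z ^ (p - 1) / (1 - z) ^ α‖ ≤ M / (ε / (x + 1)) ^ α := by
    intro z hz
    rw [uIoc_of_le hcb] at hz
    have hz1 : ε / (x + 1) ≤ 1 - z := by linarith [hz.2]
    rw [norm_div, Real.norm_eq_abs ((1 - z) ^ α),
      abs_of_pos (Real.rpow_pos_of_pos (hδ.trans_le hz1) α)]
    exact div_le_div₀ hM0 (hM z ⟨by linarith [hz.1], by linarith [hz.2]⟩)
      (Real.rpow_pos_of_pos hδ α) (Real.rpow_le_rpow hδ.le hz1 hα0)
  calc ‖∫ z in 1 - ε / x..x / (x + ε), z ^ (p - 1) / (1 - z) ^ α‖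
      ≤ M / (ε / (x + 1)) ^ α * |x / (x + ε) - (1 - ε / x)| :=
        norm_integral_le_of_norm_le_const hpt
    _ ≤ M / (ε / (x + 1)) ^ α * (ε ^ 2 / x ^ 2) := by
        rw [hgap, abs_of_nonneg (by positivity)]
        gcongr
        nlinarith
    _ = M * (x + 1) ^ α / x ^ 2 * ε ^ (2 - α) := by
        rw [Real.div_rpow hε0.le (by positivity), Real.rpow_sub hε0, Real.rpow_two]
        field_simp

theorem tendsto_integral_div_add_nhdsGT_zero {f : ℝ → ℝ} {x : ℝ} (hx : 0 < x)
    (hf : IntegrableOn f (Ioo (x / (x + 1)) 1)) :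
    Tendsto (fun ε => ∫ z in x / (x + 1)..x / (x + ε), f z) (𝓝[>] 0)
      (𝓝 (∫ z in x / (x + 1)..1, f z)) := by
  have ha1 : x / (x + 1) ≤ 1 := (div_le_one (by linarith)).2 (by linarith)
  have hprim := continuousOn_primitive_interval'
    ((intervalIntegrable_iff_integrableOn_Ioo_of_le ha1).2 hf) left_mem_uIcc 1 right_mem_uIcc
  refine hprim.tendsto.comp (tendsto_nhdsWithin_iff.2 ⟨?_, ?_⟩)
  · have h : Tendsto (fun ε => x / (x + ε)) (𝓝 0) (𝓝 (x / (x + 0))) :=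
      tendsto_const_nhds.div (tendsto_const_nhds.add tendsto_id) (by linarith)
    rw [add_zero, div_self hx.ne'] at h
    exact h.mono_left nhdsWithin_le_nhds
  · filter_upwards [Ioo_mem_nhdsGT zero_lt_one] with ε hε
    rw [uIcc_of_le ha1]
    exact ⟨div_le_div_of_nonneg_left hx.le (by linarith [hε.1]) (by linarith [hε.2]),
      (div_le_one (by linarith [hε.1])).2 (by linarith [hε.1])⟩

theorem statement13 (α p : ℝ) (hα1 : 0 < α) (hα2 : α < 2) (hp : 0 < p)
    (x : ℝ) (hx : x ∈ Set.Ioo (0 : ℝ) 1) :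
    IntegrableOn (fun z : ℝ => (z ^ (α - p - 1) - z ^ (p - 1)) / (1 - z) ^ α)
      (Set.Ioo (x / (x + 1)) 1) ∧
    IntegrableOn (fun z : ℝ => z ^ (p - 1) / (1 - z) ^ α) (Set.Ioo 0 (x / (x + 1))) ∧
    truncFracLapPV 1 α 1 (wp 1 one_pos p) (EuclideanSpace.single 0 x)
      (frakA 1 α / α *
        (2 * x ^ p - (x + 1) ^ p + p * x ^ (p - α) *
          ((∫ z in Set.Ioo (x / (x + 1)) 1, (z ^ (α - p - 1) - z ^ (p - 1)) / (1 - z) ^ α) -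
            ∫ z in Set.Ioo (0 : ℝ) (x / (x + 1)), z ^ (p - 1) / (1 - z) ^ α))) := by
  obtain ⟨hx0, hx1⟩ := hx
  have ha0 : 0 < x / (x + 1) := by positivity
  have ha1 : x / (x + 1) < 1 := (div_lt_one (by linarith)).2 (by linarith)
  have hg₁ := integrableOn_rpow_sub_rpow_div_one_sub_rpow (r := α - p - 1) (s := p - 1) ha0 hα2
  have hg₂ := integrableOn_rpow_div_one_sub_rpow (r := p - 1) ha1 (by linarith) hα1.le
  refine ⟨hg₁, hg₂, ?_⟩
  have hboundary := tendsto_rpow_secondDiff_mul_rpow_neg (p := p) hα2 hx0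
  have hupper := tendsto_integral_div_add_nhdsGT_zero hx0 hg₁
  have hgap := tendsto_integral_rpow_div_one_sub_rpow_gap (p := p) hα1.le hα2 hx0
  have hlim := ((hboundary.add_const (2 * x ^ p - (x + 1) ^ p)).add
    (((hupper.add hgap).sub_const (∫ z in 0..x / (x + 1), z ^ (p - 1) / (1 - z) ^ α)).const_mul
      (p * x ^ (p - α)))).const_mul (frakA 1 α / α)
  unfold truncFracLapPV
  rw [← integral_Ioc_eq_integral_Ioo, ← integral_Ioc_eq_integral_Ioo, ← integral_of_le ha1.le,
    ← integral_of_le ha0.le, Nat.cast_one]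
  convert hlim.congr' ?_ using 2
  · ring
  filter_upwards [Ioo_mem_nhdsGT ha0] with ε hε
  exact (setIntegral_annulus_wp_eq_of_lt hα1 hp hx0 hx1 hε).symm
end
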